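/- arXiv:1606.05845 — 4 statements merged into one kernel-verified Lean document; each statement's English description precedes it below -/
import Mathlib

section
/- Let N > 2s with s ∈ (0,1), and let g : ℝ → ℝ satisfy (g1), (g2) with constant m > 0, and (g3). Define, for t ≥ 0, g₁(t) = max(g(t)+mt, 0) and g₂(t) = g₁(t) − g(t), extended oddly to t < 0. Then for every ε > 0 there exists C_ε > 0 such that g₁(t) ≤ C_ε t^{2*_s−1} + ε g₂(t) for all t ≥ 0. -/
/-!
Since `g₁ ≥ g + m t`, we have `g₂(t) ≥ m t` for `t ≥ 0`. Near `0`, (g2) gives `g(t) ≤ (ε - 1) m t`,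
so `g₁(t) ≤ ε m t ≤ ε g₂(t)`. Away from `0`, `g₁ ≤ |g + m t|`, and `g + m t = O(t^{2*_s-1})` at
infinity by (g3) and `2*_s - 1 ≥ 1`; continuity on the remaining compact interval turns this into a
global bound `g₁(t) ≤ C t^{2*_s-1}` for `t ≥ δ`.
-/

open MeasureTheory Filter Topology ENNReal

/-- `g₁(t) = (g(t) + m t)⁺` for `t ≥ 0`, extended as an odd function for `t < 0`. -/
noncomputable def gOne (g : ℝ → ℝ) (m : ℝ) (t : ℝ) : ℝ :=
  if 0 ≤ t then max (g t + m * t) 0 else -(max (g (-t) + m * (-t)) 0)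

/-- `g₂ = g₁ − g` (which is the odd extension of `g₁(t) − g(t)`, `t ≥ 0`, since `g` is odd). -/
noncomputable def gTwo (g : ℝ → ℝ) (m : ℝ) (t : ℝ) : ℝ := gOne g m t - g t

open Asymptotics Set

lemma two_le_two_mul_div_sub {N s : ℝ} (hs : 0 ≤ s) (hNs : 2 * s < N) :
    2 ≤ 2 * N / (N - 2 * s) := by
  rw [le_div_iff₀ (by linarith)]
  linarith

lemma eventually_lt_mul_of_limsup_div_lt {g : ℝ → ℝ} {c : ℝ}
    (h : limsup (fun t : ℝ => ((g t / t : ℝ) : EReal)) (𝓝[>] 0) < c) :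
    ∀ᶠ t in 𝓝[>] (0 : ℝ), g t < c * t := by
  filter_upwards [eventually_lt_of_limsup_lt h, self_mem_nhdsWithin] with t ht ht0
  exact (div_lt_iff₀ ht0).mp (EReal.coe_lt_coe_iff.mp ht)

lemma id_isBigO_rpow_atTop {p : ℝ} (hp : 1 ≤ p) : (fun t : ℝ => t) =O[atTop] fun t => t ^ p := by
  refine IsBigO.of_bound' ?_
  filter_upwards [eventually_ge_atTop 1] with t ht
  rw [Real.norm_of_nonneg (by linarith), Real.norm_of_nonneg (Real.rpow_nonneg (by linarith) p)]
  exact Real.self_le_rpow_of_one_le ht hp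

lemma exists_abs_le_mul_rpow_of_isBigO {f : ℝ → ℝ} {p δ : ℝ} (hδ : 0 < δ)
    (hf : ContinuousOn f (Ici δ)) (hO : f =O[atTop] fun t => t ^ p) :
    ∃ C, ∀ t, δ ≤ t → |f t| ≤ C * t ^ p := by
  obtain ⟨c, hc⟩ := hO.bound
  obtain ⟨T, hT⟩ := eventually_atTop.mp hc
  have hratio : ContinuousOn (fun t => f t / t ^ p) (Icc δ T) :=
    (hf.mono Icc_subset_Ici_self).div (continuousOn_id.rpow_const fun t ht =>
      Or.inl (hδ.trans_le ht.1).ne')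
      fun t ht => (Real.rpow_pos_of_pos (hδ.trans_le ht.1) p).ne'
  obtain ⟨M, hM⟩ := isCompact_Icc.exists_bound_of_continuousOn hratio
  refine ⟨max c M, fun t ht => ?_⟩
  have htp : 0 < t ^ p := Real.rpow_pos_of_pos (hδ.trans_le ht) p
  rcases le_total T t with hTt | htT
  · calc |f t| ≤ c * ‖t ^ p‖ := hT t hTt
      _ = c * t ^ p := by rw [Real.norm_of_nonneg htp.le]
      _ ≤ max c M * t ^ p := by gcongr; exact le_max_left c M
  · have hMt : |f t| / t ^ p ≤ M := by
      simpa [abs_div, abs_of_pos htp] using hM t ⟨ht, htT⟩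
    calc |f t| ≤ M * t ^ p := (div_le_iff₀ htp).mp hMt
      _ ≤ max c M * t ^ p := by gcongr; exact le_max_right c M

lemma isLittleO_rpow_of_tendsto_abs_div {g : ℝ → ℝ} {p : ℝ}
    (h : Tendsto (fun t => |g t| / |t| ^ p) atTop (𝓝 0)) : g =o[atTop] fun t => t ^ p := by
  have habs : (fun t => |g t|) =o[atTop] fun t => |t| ^ p := by
    refine (isLittleO_iff_tendsto' ?_).mpr h
    filter_upwards [eventually_gt_atTop 0] with t ht h0
    exact absurd h0 (Real.rpow_pos_of_pos (abs_pos.mpr ht.ne') p).ne'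
  refine (isLittleO_abs_left.mp habs).trans_eventuallyEq ?_
  filter_upwards [eventually_ge_atTop 0] with t ht
  rw [abs_of_nonneg ht]

section gOneTwo

variable {g : ℝ → ℝ} {m t : ℝ}

lemma gOne_of_nonneg (ht : 0 ≤ t) : gOne g m t = max (g t + m * t) 0 := by
  simp [gOne, ht]

lemma mul_le_gTwo (ht : 0 ≤ t) : m * t ≤ gTwo g m t := by
  rw [gTwo, gOne_of_nonneg ht]
  linarith [le_max_left (g t + m * t) 0]

lemma gOne_le_abs (ht : 0 ≤ t) : gOne g m t ≤ |g t + m * t| := by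
  rw [gOne_of_nonneg ht]
  exact max_le (le_abs_self _) (abs_nonneg _)

lemma gOne_le_mul_gTwo {ε : ℝ} (hm : 0 ≤ m) (hε : 0 ≤ ε) (ht : 0 ≤ t)
    (hg : g t ≤ (ε - 1) * m * t) : gOne g m t ≤ ε * gTwo g m t :=
  calc gOne g m t ≤ ε * (m * t) := by
        rw [gOne_of_nonneg ht]
        exact max_le (by linarith) (by positivity)
    _ ≤ ε * gTwo g m t := by gcongr; exact mul_le_gTwo ht

end gOneTwo

theorem gOne_le_of_gTwo_general
    (N : ℕ) (s : ℝ) (hs : s ∈ Set.Ioo (0:ℝ) 1) (hNs : 2 * s < N)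
    (g : ℝ → ℝ) (m : ℝ)
-- (g1)
    (hg1 : ContDiff ℝ 1 g) (hodd : ∀ t, g (-t) = -g t)
    -- (g2)
    (hm : 0 < m)
    (hg2c : Filter.limsup (fun t : ℝ => ((g t / t : ℝ) : EReal)) (𝓝[>] (0:ℝ))
        = ((-m : ℝ) : EReal))
-- (g3)
    (hg3top : Tendsto (fun t : ℝ => |g t| / |t| ^ (2 * (N:ℝ) / ((N:ℝ) - 2*s) - 1))
        atTop (𝓝 0)) :
    ∀ ε : ℝ, 0 < ε → ∃ C : ℝ, 0 < C ∧ ∀ t : ℝ, 0 ≤ t →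
      gOne g m t ≤ C * t ^ (2 * (N:ℝ) / ((N:ℝ) - 2*s) - 1) + ε * gTwo g m t := by
  intro ε hε
  set p := 2 * (N:ℝ) / ((N:ℝ) - 2*s) - 1
  have hp : 1 ≤ p := by linarith [two_le_two_mul_div_sub hs.1.le hNs]
  have hg0 : g 0 = 0 := CharZero.eq_neg_self_iff.mp (by simpa using hodd 0)
  have hnear : ∀ᶠ t in 𝓝[>] (0:ℝ), g t < (ε - 1) * m * t :=
    eventually_lt_mul_of_limsup_div_lt (hg2c ▸ EReal.coe_lt_coe_iff.mpr (by nlinarith))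
  obtain ⟨δ, hδ, hδnear⟩ := mem_nhdsGT_iff_exists_Ioo_subset.mp hnear
  have hfar : (fun t => g t + m * t) =O[atTop] fun t => t ^ p :=
    (isLittleO_rpow_of_tendsto_abs_div hg3top).isBigO.add
      ((id_isBigO_rpow_atTop hp).const_mul_left m)
  obtain ⟨C, hC⟩ := exists_abs_le_mul_rpow_of_isBigO hδ
    (hg1.continuous.add (continuous_const_mul m)).continuousOn hfar
  refine ⟨max C 1, by positivity, fun t ht => ?_⟩
  have htp : 0 ≤ t ^ p := Real.rpow_nonneg ht p
  have hg2 : 0 ≤ gTwo g m t := le_trans (by positivity) (mul_le_gTwo ht)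
  rcases lt_or_ge t δ with htδ | hδt
  · have hsmall : g t ≤ (ε - 1) * m * t := by
      rcases ht.eq_or_lt with rfl | ht0
      · simp [hg0]
      · exact (hδnear ⟨ht0, htδ⟩).le
    exact (gOne_le_mul_gTwo hm.le hε.le ht hsmall).trans (le_add_of_nonneg_left (by positivity))
  · calc gOne g m t ≤ |g t + m * t| := gOne_le_abs ht
      _ ≤ C * t ^ p := hC t hδt
      _ ≤ max C 1 * t ^ p := by gcongr; exact le_max_left C 1
      _ ≤ max C 1 * t ^ p + ε * gTwo g m t := le_add_of_nonneg_right (by positivity)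

/-- for every `ε > 0` there is `C_ε > 0` with
`g₁(t) ≤ C_ε t^{2*_s−1} + ε g₂(t)` for all `t ≥ 0`. -/
theorem gOne_le_of_gTwo
    (N : ℕ) (s : ℝ) (hs : s ∈ Set.Ioo (0:ℝ) 1) (hNs : 2 * s < N)
    (g : ℝ → ℝ) (m : ℝ)
-- (g1)
    (hg1 : ContDiff ℝ 1 g) (hodd : ∀ t, g (-t) = -g t)
    -- (g2)
    (hm : 0 < m)
    (hg2a : ⊥ < Filter.liminf (fun t : ℝ => ((g t / t : ℝ) : EReal)) (𝓝[>] (0:ℝ)))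
    (hg2b : Filter.liminf (fun t : ℝ => ((g t / t : ℝ) : EReal)) (𝓝[>] (0:ℝ)) ≤
        Filter.limsup (fun t : ℝ => ((g t / t : ℝ) : EReal)) (𝓝[>] (0:ℝ)))
    (hg2c : Filter.limsup (fun t : ℝ => ((g t / t : ℝ) : EReal)) (𝓝[>] (0:ℝ))
        = ((-m : ℝ) : EReal))
-- (g3)
    (hg3top : Tendsto (fun t : ℝ => |g t| / |t| ^ (2 * (N:ℝ) / ((N:ℝ) - 2*s) - 1))
        atTop (𝓝 0))
    (hg3bot : Tendsto (fun t : ℝ => |g t| / |t| ^ (2 * (N:ℝ) / ((N:ℝ) - 2*s) - 1))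
        atBot (𝓝 0)) :
    ∀ ε : ℝ, 0 < ε → ∃ C : ℝ, 0 < C ∧ ∀ t : ℝ, 0 ≤ t →
      gOne g m t ≤ C * t ^ (2 * (N:ℝ) / ((N:ℝ) - 2*s) - 1) + ε * gTwo g m t :=
  gOne_le_of_gTwo_general N s hs hNs g m hg1 hodd hm hg2c hg3top
end

section
/- Let s ∈ (0,1), N ≥ 2 an integer with N > 2s, and let g satisfy (g1)–(g3) with constant m > 0. There exists a constant C > 0, depending only on g, m, N, s, such that for every Λ > 0, every q ≥ 0, and every u ∈ H^s(ℝ^N) ∩ L^{2*_s}(ℝ^N), the truncated functional satisfies F_q^Λ(u) ≥ min{1/2, m/4} ‖u‖²_{H^s} − C ‖u‖^{2*_s}_{L^{2*_s}(ℝ^N)}. -/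
open MeasureTheory Filter Topology ENNReal

/-- The (squared) Gagliardo seminorm `[u]² = ∬ |u(x)−u(y)|²/|x−y|^{N+2s} dx dy`. -/
noncomputable def gagliardo (N : ℕ) (s : ℝ) (u : EuclideanSpace ℝ (Fin N) → ℝ) : ℝ≥0∞ :=
  ∫⁻ x : EuclideanSpace ℝ (Fin N), ∫⁻ y : EuclideanSpace ℝ (Fin N),
    ENNReal.ofReal ((u x - u y) ^ 2 / ‖x - y‖ ^ ((N : ℝ) + 2 * s))

/-- The squared `H^s` norm `‖u‖²_{H^s} = [u]² + ‖u‖²_{L²}`. -/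
noncomputable def hsNormSq (N : ℕ) (s : ℝ) (u : EuclideanSpace ℝ (Fin N) → ℝ) : ℝ :=
  (gagliardo N s u).toReal + ((eLpNorm u 2 volume).toReal) ^ 2

/-- `G(t) = ∫₀ᵗ g(τ) dτ`. -/
noncomputable def bigG (g : ℝ → ℝ) (t : ℝ) : ℝ := ∫ τ in (0:ℝ)..t, g τ

/-- The truncated functional
`F_q^Λ(u) = (1/2)[u]² + q χ(‖u‖²_{H^s}/Λ²) ((1−s)/4)[u]⁴ − ∫ G(u)`. -/
noncomputable def truncF (N : ℕ) (s : ℝ) (g χ : ℝ → ℝ) (q Λ : ℝ)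
    (u : EuclideanSpace ℝ (Fin N) → ℝ) : ℝ :=
  (1 / 2) * (gagliardo N s u).toReal
    + q * χ (hsNormSq N s u / Λ ^ 2) * ((1 - s) / 4 * ((gagliardo N s u).toReal) ^ 2)
    - ∫ x : EuclideanSpace ℝ (Fin N), bigG g (u x)


lemma bigG_even {g : ℝ → ℝ} (hodd : ∀ t, g (-t) = -g t) (t : ℝ) :
    bigG g (-t) = bigG g t := by
  unfold bigG
  have : ∀ τ : ℝ, g τ = -g (-τ) := by intro τ; rw [hodd]; ring
  calc ∫ τ in (0:ℝ)..(-t), g τ = ∫ τ in (0:ℝ)..(-t), -g (-τ) := by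
        exact intervalIntegral.integral_congr (fun x _ => this x)
    _ = -∫ τ in (0:ℝ)..(-t), g (-τ) := by rw [intervalIntegral.integral_neg]
    _ = -∫ τ in t..(0:ℝ), g τ := by rw [intervalIntegral.integral_comp_neg]; norm_num
    _ = ∫ τ in (0:ℝ)..t, g τ := by rw [intervalIntegral.integral_symm]; ring

lemma pointwise_bound {g : ℝ → ℝ} (hg : Continuous g) (hodd : ∀ t, g (-t) = -g t)
    {m p : ℝ} (hm : 0 < m) (hp : 2 < p)
    (hg2c : Filter.limsup (fun t : ℝ => ((g t / t : ℝ) : EReal)) (𝓝[>] (0:ℝ))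
        = ((-m : ℝ) : EReal))
    (hg3top : Tendsto (fun t : ℝ => |g t| / |t| ^ (p - 1)) atTop (𝓝 0)) :
    ∃ C : ℝ, 0 < C ∧ ∀ t : ℝ, bigG g t ≤ -(m/4) * t^2 + C * |t| ^ p := by
  have hg0 : g 0 = 0 := by have := hodd 0; simp at this; linarith
  -- step 1: small t estimate
  have hev : ∀ᶠ t in 𝓝[>] (0:ℝ), ((g t / t : ℝ) : EReal) < ((-m/2 : ℝ) : EReal) := by
    refine Filter.eventually_lt_of_limsup_lt ?_ ⟨⊤, Filter.eventually_map.2 (Filter.Eventually.of_forall fun _ => le_top)⟩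
    rw [hg2c]
    exact_mod_cast (by linarith : -m < -m/2)
  obtain ⟨S, hS, hSsub⟩ := hev.exists_mem
  obtain ⟨δ, hδmem, hδsub⟩ := mem_nhdsGT_iff_exists_Ioo_subset.1 hS
  have hδpos : 0 < δ := hδmem
  set δ₀ := δ / 2 with hδ₀
  have hδ₀pos : 0 < δ₀ := by positivity
  have hsmall : ∀ t ∈ Set.Icc (0:ℝ) δ₀, g t ≤ -(m/2) * t := by
    intro t ht
    rcases eq_or_lt_of_le ht.1 with rfl | htpos
    · simp [hg0]
    · have htI : t ∈ Set.Ioo (0:ℝ) δ := ⟨htpos, by linarith [ht.2]⟩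
      have := hSsub t (hδsub htI)
      have h2 : g t / t < -m/2 := by exact_mod_cast this
      have := (div_lt_iff₀ htpos).1 h2
      linarith
  have hGsmall : ∀ t ∈ Set.Icc (0:ℝ) δ₀, bigG g t ≤ -(m/4) * t^2 := by
    intro t ht
    have hInt1 : IntervalIntegrable g volume 0 t := hg.intervalIntegrable 0 t
    have hInt2 : IntervalIntegrable (fun x : ℝ => -(m/2) * x) volume 0 t :=
      (continuous_const.mul continuous_id).intervalIntegrable 0 t
    have := intervalIntegral.integral_mono_on ht.1 hInt1 hInt2
      (fun x hx => hsmall x ⟨hx.1, le_trans hx.2 ht.2⟩)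
    have heval : (∫ x in (0:ℝ)..t, -(m/2) * x) = -(m/4) * t^2 := by
      rw [intervalIntegral.integral_const_mul, integral_id]
      ring
    rw [heval] at this
    exact this
  -- step 4: global growth bound on |g|
  have hp1 : (0:ℝ) < p - 1 := by linarith
  obtain ⟨T₀, hT₀⟩ := (Metric.tendsto_atTop.1 hg3top) 1 one_pos
  set T := max T₀ 1 with hT
  have hTone : (1:ℝ) ≤ T := le_max_right _ _
  have hbig : ∀ t : ℝ, T ≤ t → |g t| ≤ |t| ^ (p - 1) := by
    intro t ht
    have h1 := hT₀ t (le_trans (le_max_left _ _) ht)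
    have htpos : (0:ℝ) < t := lt_of_lt_of_le one_pos (le_trans hTone ht)
    have hpow : (0:ℝ) < |t| ^ (p - 1) := by
      apply Real.rpow_pos_of_pos; rwa [abs_of_pos htpos]
    rw [Real.dist_eq, sub_zero] at h1
    have h2 : |g t| / |t| ^ (p-1) ≤ 1 := by
      have : |g t| / |t| ^ (p-1) ≥ 0 := by positivity
      rw [abs_of_nonneg this] at h1
      linarith
    calc |g t| = (|g t| / |t| ^ (p-1)) * |t|^(p-1) := by field_simp
      _ ≤ 1 * |t|^(p-1) := by apply mul_le_mul_of_nonneg_right h2 hpow.le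
      _ = |t|^(p-1) := one_mul _
  obtain ⟨M, hM⟩ := (isCompact_Icc (a := -T) (b := T)).exists_bound_of_continuousOn
    hg.continuousOn
  have hMnn : 0 ≤ M := le_trans (norm_nonneg _) (hM 0 (by constructor <;> linarith))
  have hglobal : ∀ t : ℝ, |g t| ≤ M + |t| ^ (p - 1) := by
    have haux : ∀ t : ℝ, 0 ≤ t → |g t| ≤ M + |t| ^ (p - 1) := by
      intro t ht
      rcases le_or_gt t T with h | h
      · have := hM t ⟨by linarith, h⟩
        have hpow : 0 ≤ |t| ^ (p - 1) := Real.rpow_nonneg (abs_nonneg _) _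
        calc |g t| = ‖g t‖ := (Real.norm_eq_abs _).symm
          _ ≤ M := this
          _ ≤ M + |t|^(p-1) := by linarith
      · have := hbig t h.le
        linarith
    intro t
    rcases le_or_gt 0 t with h | h
    · exact haux t h
    · have := haux (-t) (by linarith)
      rwa [hodd, abs_neg, abs_neg] at this
  -- step 5: for t ≥ 0, G t ≤ M t + t ^ p
  have hGgrow : ∀ t : ℝ, 0 ≤ t → bigG g t ≤ M * t + t ^ p := by
    intro t ht
    have hInt1 : IntervalIntegrable g volume 0 t := hg.intervalIntegrable 0 t
    have hInt2 : IntervalIntegrable (fun x : ℝ => M + x ^ (p-1)) volume 0 t :=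
      (intervalIntegrable_const).add (intervalIntegral.intervalIntegrable_rpow' (by linarith))
    have hmono := intervalIntegral.integral_mono_on ht hInt1 hInt2
      (fun x hx => by
        have h1 : g x ≤ |g x| := le_abs_self _
        have h2 := hglobal x
        rw [abs_of_nonneg hx.1] at h2
        linarith)
    have heval : (∫ x in (0:ℝ)..t, (M + x ^ (p-1))) = M * t + t ^ p / p := by
      rw [intervalIntegral.integral_add intervalIntegrable_const
        (intervalIntegral.intervalIntegrable_rpow' (by linarith)),
        intervalIntegral.integral_const, integral_rpow (Or.inl (by linarith))]
      rw [Real.zero_rpow (by linarith : p - 1 + 1 ≠ 0)]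
      have : p - 1 + 1 = p := by ring
      rw [this]
      simp [smul_eq_mul]
      ring
    rw [heval] at hmono
    have hpp : t ^ p / p ≤ t ^ p := by
      have h0 : 0 ≤ t ^ p := Real.rpow_nonneg ht _
      rw [div_le_iff₀ (by linarith : (0:ℝ) < p)]
      nlinarith
    have hGe : bigG g t = ∫ τ in (0:ℝ)..t, g τ := rfl
    rw [hGe]
    linarith
  -- step 6: combine
  set A := δ₀ ^ (p - 1) with hA
  set B := δ₀ ^ (p - 2) with hB
  have hApos : 0 < A := Real.rpow_pos_of_pos hδ₀pos _
  have hBpos : 0 < B := Real.rpow_pos_of_pos hδ₀pos _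
  refine ⟨M / A + 1 + (m/4) / B, by positivity, ?_⟩
  have key : ∀ t : ℝ, 0 ≤ t → bigG g t ≤ -(m/4) * t^2 + (M / A + 1 + (m/4)/B) * |t| ^ p := by
    intro t ht
    have habs : |t| = t := abs_of_nonneg ht
    rcases le_or_gt t δ₀ with h | h
    · have := hGsmall t ⟨ht, h⟩
      have hpow : 0 ≤ |t| ^ p := Real.rpow_nonneg (abs_nonneg _) _
      nlinarith [mul_nonneg (by positivity : (0:ℝ) ≤ M / A + 1 + (m/4)/B) hpow]
    · have htpos : 0 < t := lt_trans hδ₀pos h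
      have hG := hGgrow t ht
      rw [habs]
      have hsplit1 : t ^ p = t * t ^ (p - 1) := by
        have h' := Real.rpow_add htpos 1 (p - 1)
        rw [Real.rpow_one] at h'
        rw [show (1:ℝ) + (p - 1) = p by ring] at h'
        exact h'
      have hsplit2 : t ^ p = t ^ (2:ℕ) * t ^ (p - 2) := by
        have h' := Real.rpow_add htpos 2 (p - 2)
        rw [show (2:ℝ) + (p - 2) = p by ring] at h'
        rw [show t ^ (2:ℝ) = t ^ (2:ℕ) by rw [← Real.rpow_natCast t 2]; norm_num] at h'
        exact h'
      have h1 : δ₀ ^ (p-1) ≤ t ^ (p-1) := Real.rpow_le_rpow hδ₀pos.le h.le (by linarith)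
      have h2 : δ₀ ^ (p-2) ≤ t ^ (p-2) := Real.rpow_le_rpow hδ₀pos.le h.le (by linarith)
      have e1 : M * t ≤ M / A * t ^ p := by
        have hre : M / A * t ^ p = M * t * (t ^ (p-1) / A) := by rw [hsplit1]; ring
        rw [hre]
        refine le_mul_of_one_le_right (by positivity) ?_
        rw [le_div_iff₀ hApos, one_mul]; exact h1
      have e2 : (m/4) * t ^ (2:ℕ) ≤ (m/4) / B * t ^ p := by
        have hre : (m/4) / B * t ^ p = (m/4) * t ^ (2:ℕ) * (t ^ (p-2) / B) := by
          rw [hsplit2]; ring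
        rw [hre]
        refine le_mul_of_one_le_right (by positivity) ?_
        rw [le_div_iff₀ hBpos, one_mul]; exact h2
      have e3 : t ^ p ≤ 1 * t ^ p := by rw [one_mul]
      have : bigG g t + (m/4) * t^2 ≤ (M / A + 1 + (m/4)/B) * t ^ p := by
        have : bigG g t + (m/4) * t^2 ≤ M * t + t ^ p + (m/4) * t^2 := by linarith
        calc bigG g t + (m/4) * t^2 ≤ M * t + t ^ p + (m/4) * t^2 := this
          _ ≤ M / A * t ^ p + 1 * t ^ p + (m/4)/B * t ^ p := by
              linarith
          _ = (M / A + 1 + (m/4)/B) * t ^ p := by ring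
      linarith
  intro t
  rcases le_or_gt 0 t with h | h
  · exact key t h
  · have h2 := key (-t) (by linarith)
    rw [bigG_even hodd, abs_neg, neg_sq] at h2
    exact h2
    

/-- the lower bound
`F_q^Λ(u) ≥ min{1/2, m/4} ‖u‖²_{H^s} − C ‖u‖^{2*_s}_{L^{2*_s}}`. -/
theorem truncF_lower_bound
    (N : ℕ) (hN : 2 ≤ N) (s : ℝ) (hs : s ∈ Set.Ioo (0:ℝ) 1) (hNs : 2 * s < N)
    (g : ℝ → ℝ) (m : ℝ)
-- (g1)
    (hg1 : ContDiff ℝ 1 g) (hodd : ∀ t, g (-t) = -g t)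
    -- (g2)
    (hm : 0 < m)
    (hg2a : ⊥ < Filter.liminf (fun t : ℝ => ((g t / t : ℝ) : EReal)) (𝓝[>] (0:ℝ)))
    (hg2b : Filter.liminf (fun t : ℝ => ((g t / t : ℝ) : EReal)) (𝓝[>] (0:ℝ)) ≤
        Filter.limsup (fun t : ℝ => ((g t / t : ℝ) : EReal)) (𝓝[>] (0:ℝ)))
    (hg2c : Filter.limsup (fun t : ℝ => ((g t / t : ℝ) : EReal)) (𝓝[>] (0:ℝ))
        = ((-m : ℝ) : EReal))
-- (g3)
    (hg3top : Tendsto (fun t : ℝ => |g t| / |t| ^ (2 * (N:ℝ) / ((N:ℝ) - 2*s) - 1))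
        atTop (𝓝 0))
    (hg3bot : Tendsto (fun t : ℝ => |g t| / |t| ^ (2 * (N:ℝ) / ((N:ℝ) - 2*s) - 1))
        atBot (𝓝 0))
-- the cut-off function χ
    (χ : ℝ → ℝ)
    (hχ1 : ContDiffOn ℝ (⊤ : ℕ∞) χ (Set.Ici (0:ℝ)))
    (hχ2 : ∀ t ∈ Set.Icc (0:ℝ) 1, χ t = 1)
    (hχ3 : ∀ t ∈ Set.Ioo (1:ℝ) 2, 0 ≤ χ t ∧ χ t ≤ 1)
    (hχ4 : ∀ t : ℝ, 2 ≤ t → χ t = 0)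
    (hχ5 : ∀ t : ℝ, 0 ≤ t → |deriv χ t| ≤ 2) :
    ∃ C : ℝ, 0 < C ∧ ∀ Λ : ℝ, 0 < Λ → ∀ q : ℝ, 0 ≤ q →
      ∀ u : EuclideanSpace ℝ (Fin N) → ℝ,
        MemLp u 2 volume → gagliardo N s u < ⊤ →
        MemLp u (ENNReal.ofReal (2 * (N:ℝ) / ((N:ℝ) - 2 * s))) volume →
        Integrable (fun x => bigG g (u x)) volume →
        min (1/2) (m/4) * hsNormSq N s u
          - C * ((eLpNorm u (ENNReal.ofReal (2 * (N:ℝ) / ((N:ℝ) - 2 * s))) volume).toReal)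
              ^ (2 * (N:ℝ) / ((N:ℝ) - 2 * s))
        ≤ truncF N s g χ q Λ u := by
  set p : ℝ := 2 * (N:ℝ) / ((N:ℝ) - 2 * s) with hpdef
  have hNpos : (0:ℝ) < (N:ℝ) - 2*s := by linarith
  have hp2 : 2 < p := by
    rw [hpdef, lt_div_iff₀ hNpos]
    have hs0 := hs.1
    linarith
  have hppos : (0:ℝ) < p := by linarith
  obtain ⟨C, hCpos, hC⟩ := pointwise_bound hg1.continuous hodd hm hp2 hg2c hg3top
  refine ⟨C, hCpos, ?_⟩
  intro Λ hΛ q hq u hu2 hgag hup hint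
  set E : ℝ≥0∞ := ENNReal.ofReal p with hE
  have hEne : E ≠ 0 := by
    rw [hE, Ne, ENNReal.ofReal_eq_zero, not_le]; exact hppos
  have hEtop : E ≠ ⊤ := ENNReal.ofReal_ne_top
  have hEtoReal : E.toReal = p := ENNReal.toReal_ofReal hppos.le
  have hcongr2 : ∀ y : ℝ, ‖y‖ ^ (2:ℝ) = y ^ (2:ℕ) := by
    intro y
    rw [show (2:ℝ) = ((2:ℕ):ℝ) by norm_num, Real.rpow_natCast, Real.norm_eq_abs, sq_abs]
  -- the L² identity
  set L := (eLpNorm u 2 volume).toReal with hL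
  set LP := (eLpNorm u E volume).toReal with hLP
  have hI2 : ∫ x, (u x) ^ (2:ℕ) = L ^ (2:ℕ) := by
    have h := hu2.eLpNorm_eq_integral_rpow_norm (by norm_num : (2:ℝ≥0∞) ≠ 0)
      (by norm_num : (2:ℝ≥0∞) ≠ ⊤)
    have htr : (2:ℝ≥0∞).toReal = (2:ℝ) := by norm_num
    rw [htr] at h
    have hnn : 0 ≤ ∫ x, ‖u x‖ ^ (2:ℝ) :=
      integral_nonneg (fun x => Real.rpow_nonneg (norm_nonneg _) _)
    have hLeq : L = (∫ x, ‖u x‖ ^ (2:ℝ)) ^ ((2:ℝ)⁻¹) := by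
      rw [hL, h, ENNReal.toReal_ofReal (Real.rpow_nonneg hnn _)]
    have : L ^ (2:ℕ) = ∫ x, ‖u x‖ ^ (2:ℝ) := by
      rw [hLeq, ← Real.rpow_natCast _ 2, ← Real.rpow_mul hnn]
      norm_num
    rw [this]
    exact integral_congr_ae (Filter.Eventually.of_forall fun x => (hcongr2 (u x)).symm)
  have hIp : ∫ x, |u x| ^ p = LP ^ p := by
    have h := hup.eLpNorm_eq_integral_rpow_norm hEne hEtop
    rw [hEtoReal] at h
    have hnn : 0 ≤ ∫ x, ‖u x‖ ^ p :=
      integral_nonneg (fun x => Real.rpow_nonneg (norm_nonneg _) _)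
    have hLPeq : LP = (∫ x, ‖u x‖ ^ p) ^ (p⁻¹) := by
      rw [hLP, h, ENNReal.toReal_ofReal (Real.rpow_nonneg hnn _)]
    have : LP ^ p = ∫ x, ‖u x‖ ^ p := by
      rw [hLPeq, ← Real.rpow_mul hnn, inv_mul_cancel₀ (ne_of_gt hppos), Real.rpow_one]
    rw [this]
    exact integral_congr_ae (Filter.Eventually.of_forall fun x => by
      simp [Real.norm_eq_abs])
  -- integrability
  have int2 : Integrable (fun x => (u x) ^ (2:ℕ)) volume := by
    have h := hu2.integrable_norm_rpow (by norm_num : (2:ℝ≥0∞) ≠ 0)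
      (by norm_num : (2:ℝ≥0∞) ≠ ⊤)
    refine h.congr (Filter.Eventually.of_forall fun x => ?_)
    have htr : (2:ℝ≥0∞).toReal = (2:ℝ) := by norm_num
    simp only [htr]
    exact hcongr2 (u x)
  have intp : Integrable (fun x => |u x| ^ p) volume := by
    have h := hup.integrable_norm_rpow hEne hEtop
    rw [hEtoReal] at h
    refine h.congr (Filter.Eventually.of_forall fun x => ?_)
    simp [Real.norm_eq_abs]
  -- monotone integral comparison
  have hmono : (∫ x, bigG g (u x)) ≤ ∫ x, (-(m/4) * (u x) ^ (2:ℕ) + C * |u x| ^ p) := by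
    refine integral_mono hint ?_ (fun x => hC (u x))
    exact (int2.const_mul _).add (intp.const_mul _)
  have hsum : (∫ x, (-(m/4) * (u x) ^ (2:ℕ) + C * |u x| ^ p))
      = -(m/4) * (∫ x, (u x) ^ (2:ℕ)) + C * ∫ x, |u x| ^ p := by
    rw [integral_add (int2.const_mul _) (intp.const_mul _),
      integral_const_mul, integral_const_mul]
  have hfin : (∫ x, bigG g (u x)) ≤ -(m/4) * L ^ (2:ℕ) + C * LP ^ p := by
    rw [hsum, hI2, hIp] at hmono
    exact hmono
  -- nonnegativity of the truncation term
  have hsq : 0 ≤ hsNormSq N s u := by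
    unfold hsNormSq
    exact add_nonneg ENNReal.toReal_nonneg (sq_nonneg _)
  have hχnn : 0 ≤ χ (hsNormSq N s u / Λ ^ 2) := by
    have hanonneg : 0 ≤ hsNormSq N s u / Λ ^ 2 := div_nonneg hsq (sq_nonneg _)
    rcases le_or_gt (hsNormSq N s u / Λ ^ 2) 1 with h | h
    · rw [hχ2 _ ⟨hanonneg, h⟩]; norm_num
    rcases lt_or_ge (hsNormSq N s u / Λ ^ 2) 2 with h' | h'
    · exact (hχ3 _ ⟨h, h'⟩).1
    · rw [hχ4 _ h']
  have hTnn : 0 ≤ q * χ (hsNormSq N s u / Λ ^ 2)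
      * ((1 - s) / 4 * ((gagliardo N s u).toReal) ^ 2) := by
    refine mul_nonneg (mul_nonneg hq hχnn) (mul_nonneg ?_ (sq_nonneg _))
    have := hs.2
    linarith
  -- conclusion
  unfold truncF
  set G2 := (gagliardo N s u).toReal with hG2
  have hG2nn : 0 ≤ G2 := ENNReal.toReal_nonneg
  have hhs : hsNormSq N s u = G2 + L ^ (2:ℕ) := rfl
  have hexp : min (1/2) (m/4) * hsNormSq N s u
      = min (1/2) (m/4) * G2 + min (1/2) (m/4) * L ^ (2:ℕ) := by
    rw [hhs]; ring
  have a1 : min (1/2) (m/4) * G2 ≤ 1/2 * G2 :=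
    mul_le_mul_of_nonneg_right (min_le_left _ _) hG2nn
  have a2 : min (1/2) (m/4) * L ^ (2:ℕ) ≤ m/4 * L ^ (2:ℕ) :=
    mul_le_mul_of_nonneg_right (min_le_right _ _) (sq_nonneg _)
  linarith
end

section
/- Let s ∈ (0,1), N ≥ 2 an integer with N > 2s, let g be continuous with G(t) = ∫₀ᵗ g(τ) dτ, and fix Λ > 0, q ≥ 0 and the cut-off χ. Let u ∈ H^s(ℝ^N) be such that G(u) is integrable and ∫_{ℝ^N} G(u(x)) dx ≥ 1, and for t > 0 define u_t(x) = u(x/t). Then there exists t̄ ≥ 1 such that for all t ≥ t̄ one has F_q^Λ(u_t) < 0. -/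
open MeasureTheory Filter Topology ENNReal

/-- Change of variables for lower integrals under dilations of Euclidean space. -/
lemma lintegral_comp_smul_euclidean (N : ℕ) (f : EuclideanSpace ℝ (Fin N) → ℝ≥0∞) {c : ℝ}
    (hc : c ≠ 0) :
    ∫⁻ x : EuclideanSpace ℝ (Fin N), f (c • x) = ENNReal.ofReal |((c ^ N)⁻¹ : ℝ)| * ∫⁻ x, f x := by
  calc ∫⁻ x : EuclideanSpace ℝ (Fin N), f (c • x)
      = ∫⁻ x, f ((Homeomorph.smulOfNeZero c hc).toMeasurableEquiv x) := rfl
    _ = ∫⁻ y, f y ∂(Measure.map (Homeomorph.smulOfNeZero c hc).toMeasurableEquiv volume) :=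
        (MeasureTheory.lintegral_map_equiv f _).symm
    _ = ∫⁻ y, f y ∂(Measure.map (fun x : EuclideanSpace ℝ (Fin N) => c • x) volume) := rfl
    _ = ENNReal.ofReal |((c ^ N)⁻¹ : ℝ)| * ∫⁻ x, f x := by
        rw [Measure.map_addHaar_smul volume hc, lintegral_smul_measure,
          finrank_euclideanSpace_fin, smul_eq_mul]

lemma abs_inv_pow_inv {t : ℝ} (ht : 0 < t) (N : ℕ) : |(((t⁻¹ : ℝ) ^ N)⁻¹ : ℝ)| = t ^ N := by
  rw [inv_pow, inv_inv, abs_of_pos (pow_pos ht N)]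

/-- Scaling of the Gagliardo seminorm: `[u(·/t)]² = t^{N-2s} [u]²`. -/
lemma gagliardo_comp_smul (N : ℕ) (s : ℝ)
    (u : EuclideanSpace ℝ (Fin N) → ℝ) {t : ℝ} (ht : 0 < t) :
    gagliardo N s (fun x => u (t⁻¹ • x))
      = ENNReal.ofReal (t ^ ((N : ℝ) - 2 * s)) * gagliardo N s u := by
  have hc0 : (0:ℝ) < t⁻¹ := inv_pos.mpr ht
  have hc : (t⁻¹ : ℝ) ≠ 0 := hc0.ne'
  set p : ℝ := (N : ℝ) + 2 * s with hp
  have key : ∀ x y : EuclideanSpace ℝ (Fin N),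
      ENNReal.ofReal ((u (t⁻¹ • x) - u (t⁻¹ • y)) ^ 2 / ‖x - y‖ ^ p)
        = ENNReal.ofReal ((t ^ p)⁻¹)
          * ENNReal.ofReal ((u (t⁻¹ • x) - u (t⁻¹ • y)) ^ 2 / ‖t⁻¹ • x - t⁻¹ • y‖ ^ p) := by
    intro x y
    rw [← ENNReal.ofReal_mul (by positivity)]
    congr 1
    have hnorm : ‖x - y‖ = t * ‖t⁻¹ • x - t⁻¹ • y‖ := by
      rw [← smul_sub, norm_smul, Real.norm_eq_abs, abs_of_pos hc0]
      field_simp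
    rw [hnorm, Real.mul_rpow ht.le (norm_nonneg _)]
    ring
  have hconst : ENNReal.ofReal ((t ^ p)⁻¹) ≠ ⊤ := ENNReal.ofReal_ne_top
  calc gagliardo N s (fun x => u (t⁻¹ • x))
      = ∫⁻ x : EuclideanSpace ℝ (Fin N), ∫⁻ y, ENNReal.ofReal ((t ^ p)⁻¹) *
          ENNReal.ofReal ((u (t⁻¹ • x) - u (t⁻¹ • y)) ^ 2 / ‖t⁻¹ • x - t⁻¹ • y‖ ^ p) := by
        simp only [gagliardo, ← hp]
        exact lintegral_congr fun x => lintegral_congr fun y => key x y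
    _ = ENNReal.ofReal ((t ^ p)⁻¹) * ∫⁻ x : EuclideanSpace ℝ (Fin N), ∫⁻ y,
          ENNReal.ofReal ((u (t⁻¹ • x) - u (t⁻¹ • y)) ^ 2 / ‖t⁻¹ • x - t⁻¹ • y‖ ^ p) := by
        rw [← lintegral_const_mul' _ _ hconst]
        exact lintegral_congr fun x => lintegral_const_mul' _ _ hconst
    _ = ENNReal.ofReal ((t ^ p)⁻¹) * ∫⁻ x : EuclideanSpace ℝ (Fin N),
          ENNReal.ofReal (t ^ N) * ∫⁻ y,
          ENNReal.ofReal ((u (t⁻¹ • x) - u y) ^ 2 / ‖t⁻¹ • x - y‖ ^ p) := by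
        congr 1
        refine lintegral_congr fun x => ?_
        have := lintegral_comp_smul_euclidean N
          (fun y => ENNReal.ofReal ((u (t⁻¹ • x) - u y) ^ 2 / ‖t⁻¹ • x - y‖ ^ p)) hc
        rw [abs_inv_pow_inv ht N] at this
        exact this
    _ = ENNReal.ofReal ((t ^ p)⁻¹) * (ENNReal.ofReal (t ^ N) *
          ∫⁻ x : EuclideanSpace ℝ (Fin N),
          (fun z => ∫⁻ y, ENNReal.ofReal ((u z - u y) ^ 2 / ‖z - y‖ ^ p)) (t⁻¹ • x)) := by
        rw [lintegral_const_mul' _ _ ENNReal.ofReal_ne_top]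
    _ = ENNReal.ofReal ((t ^ p)⁻¹) * (ENNReal.ofReal (t ^ N) *
          (ENNReal.ofReal (t ^ N) * gagliardo N s u)) := by
        congr 2
        have := lintegral_comp_smul_euclidean N
          (fun z => ∫⁻ y, ENNReal.ofReal ((u z - u y) ^ 2 / ‖z - y‖ ^ p)) hc
        rw [abs_inv_pow_inv ht N] at this
        exact this
    _ = ENNReal.ofReal (t ^ ((N : ℝ) - 2 * s)) * gagliardo N s u := by
        rw [← mul_assoc, ← mul_assoc, ← ENNReal.ofReal_mul (by positivity),
          ← ENNReal.ofReal_mul (by positivity)]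
        congr 2
        rw [← Real.rpow_natCast t N, ← Real.rpow_neg ht.le, ← Real.rpow_add ht,
          ← Real.rpow_add ht]
        congr 1
        rw [hp]; ring

lemma sq_rpow_half {x : ℝ} (hx : 0 ≤ x) : (x ^ (1/2 : ℝ)) ^ 2 = x := by
  rw [← Real.rpow_natCast (x ^ (1/2:ℝ)) 2, ← Real.rpow_mul hx]
  norm_num

/-- Scaling of the squared `L²` norm: `‖u(·/t)‖²_{L²} = t^N ‖u‖²_{L²}`. -/
lemma eLpNorm_sq_comp_smul (N : ℕ) (u : EuclideanSpace ℝ (Fin N) → ℝ)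
    (hu : MemLp u 2 (volume : Measure (EuclideanSpace ℝ (Fin N)))) {t : ℝ} (ht : 0 < t) :
    ((eLpNorm (fun x => u (t⁻¹ • x)) 2 volume).toReal) ^ 2
      = t ^ N * ((eLpNorm u 2 volume).toReal) ^ 2 := by
  have hc : (t⁻¹ : ℝ) ≠ 0 := (inv_pos.mpr ht).ne'
  set L : ℝ≥0∞ := ∫⁻ x : EuclideanSpace ℝ (Fin N), (‖u x‖₊ : ℝ≥0∞) ^ (2:ℝ) with hL
  have hform : ∀ v : EuclideanSpace ℝ (Fin N) → ℝ,
      eLpNorm v 2 volume = (∫⁻ x, (‖v x‖₊ : ℝ≥0∞) ^ (2:ℝ)) ^ (1/2 : ℝ) := by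
    intro v
    rw [eLpNorm_eq_lintegral_rpow_enorm_toReal two_ne_zero ENNReal.ofNat_ne_top]
    norm_num
    rfl
  have hLc : ∫⁻ x : EuclideanSpace ℝ (Fin N), (‖u (t⁻¹ • x)‖₊ : ℝ≥0∞) ^ (2:ℝ)
      = ENNReal.ofReal (t ^ N) * L := by
    have := lintegral_comp_smul_euclidean N (fun x => (‖u x‖₊ : ℝ≥0∞) ^ (2:ℝ)) hc
    rw [abs_inv_pow_inv ht N] at this
    exact this
  have hLfin : L ≠ ⊤ := by
    intro hLtop
    have h2 := hu.2
    rw [hform u, ← hL, hLtop] at h2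
    simp [ENNReal.top_rpow_of_pos (by norm_num : (0:ℝ) < 1/2)] at h2
  rw [hform, hform, hLc, ← hL, ← ENNReal.toReal_rpow, ← ENNReal.toReal_rpow,
    ENNReal.toReal_mul, ENNReal.toReal_ofReal (pow_nonneg ht.le N),
    sq_rpow_half (by positivity), sq_rpow_half ENNReal.toReal_nonneg]

/-- negativity of the truncated functional along large dilations. -/
theorem truncF_negative_for_large_dilations
    (N : ℕ) (hN : 2 ≤ N) (s : ℝ) (hs : s ∈ Set.Ioo (0:ℝ) 1) (hNs : 2 * s < N)
    (g : ℝ → ℝ) (hg : Continuous g)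
-- the cut-off function χ
    (χ : ℝ → ℝ)
    (hχ1 : ContDiffOn ℝ (⊤ : ℕ∞) χ (Set.Ici (0:ℝ)))
    (hχ2 : ∀ t ∈ Set.Icc (0:ℝ) 1, χ t = 1)
    (hχ3 : ∀ t ∈ Set.Ioo (1:ℝ) 2, 0 ≤ χ t ∧ χ t ≤ 1)
    (hχ4 : ∀ t : ℝ, 2 ≤ t → χ t = 0)
    (hχ5 : ∀ t : ℝ, 0 ≤ t → |deriv χ t| ≤ 2)
    (Λ q : ℝ) (hΛ : 0 < Λ) (hq : 0 ≤ q)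
    (u : EuclideanSpace ℝ (Fin N) → ℝ)
    (hu2 : MemLp u 2 volume) (hugag : gagliardo N s u < ⊤)
    (hGint : Integrable (fun x => bigG g (u x)) volume)
    (hG1 : 1 ≤ ∫ x : EuclideanSpace ℝ (Fin N), bigG g (u x)) :
    ∃ tb : ℝ, 1 ≤ tb ∧ ∀ t : ℝ, tb ≤ t →
      truncF N s g χ q Λ (fun x => u (t⁻¹ • x)) < 0 := by
  obtain ⟨hs0, hs1⟩ := hs
  set A : ℝ := (gagliardo N s u).toReal with hA
  set B : ℝ := ((eLpNorm u 2 volume).toReal) ^ 2 with hB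
  set I : ℝ := ∫ x : EuclideanSpace ℝ (Fin N), bigG g (u x) with hI
  have hA0 : 0 ≤ A := ENNReal.toReal_nonneg
  -- B > 0, otherwise u = 0 a.e. and the integral of G(u) is 0 < 1
  have hB0 : 0 < B := by
    have hne : eLpNorm u 2 volume ≠ 0 := by
      intro h0
      have huz : u =ᵐ[volume] 0 := (eLpNorm_eq_zero_iff hu2.1 two_ne_zero).mp h0
      have hzero : (fun x => bigG g (u x)) =ᵐ[volume] fun _ => (0:ℝ) := by
        filter_upwards [huz] with x hx
        simp [bigG, hx]
      rw [hI, integral_congr_ae hzero] at hG1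
      simp at hG1
      linarith
    have := ENNReal.toReal_pos hne hu2.2.ne
    rw [hB]; positivity
  have hX0 : (0:ℝ) < A / 2 + 1 := by linarith
  have hT2nn : 0 ≤ (A / 2 + 1) ^ ((2 * s)⁻¹) := Real.rpow_nonneg hX0.le _
  set T2 : ℝ := (A / 2 + 1) ^ ((2 * s)⁻¹) with hT2
  refine ⟨max 1 (max (2 * Λ ^ 2 / B) T2), le_max_left _ _, fun t htb => ?_⟩
  have ht1 : (1:ℝ) ≤ t := le_trans (le_max_left _ _) htb
  have htpos : (0:ℝ) < t := lt_of_lt_of_le one_pos ht1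
  have htT1 : 2 * Λ ^ 2 / B ≤ t := le_trans (le_trans (le_max_left _ _) (le_max_right _ _)) htb
  have htT2 : T2 ≤ t := le_trans (le_trans (le_max_right _ _) (le_max_right _ _)) htb
  -- scaling identities
  have hgagt : (gagliardo N s (fun x => u (t⁻¹ • x))).toReal = t ^ ((N:ℝ) - 2 * s) * A := by
    rw [gagliardo_comp_smul N s u htpos, ENNReal.toReal_mul,
      ENNReal.toReal_ofReal (Real.rpow_nonneg htpos.le _), hA]
  have hL2t : ((eLpNorm (fun x => u (t⁻¹ • x)) 2 volume).toReal) ^ 2 = t ^ N * B :=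
    eLpNorm_sq_comp_smul N u hu2 htpos
  have hHst : hsNormSq N s (fun x => u (t⁻¹ • x)) = t ^ ((N:ℝ) - 2 * s) * A + t ^ N * B := by
    rw [hsNormSq, hgagt, hL2t]
  have hIt : (∫ x : EuclideanSpace ℝ (Fin N), bigG g (u (t⁻¹ • x))) = t ^ N * I := by
    have := Measure.integral_comp_smul (volume : Measure (EuclideanSpace ℝ (Fin N)))
      (fun x => bigG g (u x)) t⁻¹
    rw [finrank_euclideanSpace_fin, abs_inv_pow_inv htpos N, smul_eq_mul] at this
    exact this
  -- the cut-off vanishes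
  have hχ0 : χ (hsNormSq N s (fun x => u (t⁻¹ • x)) / Λ ^ 2) = 0 := by
    apply hχ4
    rw [hHst, le_div_iff₀ (by positivity)]
    have h1 : t ≤ t ^ N := le_self_pow₀ ht1 (by omega)
    have h2 : 2 * Λ ^ 2 ≤ t * B := by
      rw [div_le_iff₀ hB0] at htT1
      linarith
    have h3 : t * B ≤ t ^ N * B := mul_le_mul_of_nonneg_right h1 hB0.le
    have h4 : 0 ≤ t ^ ((N:ℝ) - 2 * s) * A := mul_nonneg (Real.rpow_nonneg htpos.le _) hA0
    linarith
  -- the key inequality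
  have hexp : (t:ℝ) ^ N = t ^ ((N:ℝ) - 2 * s) * t ^ (2 * s) := by
    rw [← Real.rpow_natCast t N, ← Real.rpow_add htpos]
    congr 1; ring
  have hts : A / 2 < t ^ (2 * s) := by
    have hmon : T2 ^ (2 * s) ≤ t ^ (2 * s) :=
      Real.rpow_le_rpow hT2nn htT2 (by positivity)
    have hTX : T2 ^ (2 * s) = A / 2 + 1 := by
      rw [hT2, ← Real.rpow_mul hX0.le, inv_mul_cancel₀ (by positivity), Real.rpow_one]
    rw [hTX] at hmon
    linarith
  have hrp : (0:ℝ) < t ^ ((N:ℝ) - 2 * s) := Real.rpow_pos_of_pos htpos _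
  have hkey : 1 / 2 * (t ^ ((N:ℝ) - 2 * s) * A) < t ^ N * I := by
    have h5 : t ^ ((N:ℝ) - 2 * s) * (A / 2) < t ^ ((N:ℝ) - 2 * s) * t ^ (2 * s) :=
      mul_lt_mul_of_pos_left hts hrp
    have h6 : t ^ ((N:ℝ) - 2 * s) * t ^ (2 * s) ≤ t ^ ((N:ℝ) - 2 * s) * t ^ (2 * s) * I :=
      le_mul_of_one_le_right (mul_pos hrp (Real.rpow_pos_of_pos htpos (2 * s))).le hG1
    rw [hexp]
    nlinarith
  -- conclusion
  have hval : truncF N s g χ q Λ (fun x => u (t⁻¹ • x))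
      = 1 / 2 * (t ^ ((N:ℝ) - 2 * s) * A) - t ^ N * I := by
    rw [truncF, hgagt, hχ0, hIt]
    ring
  rw [hval]
  linarith
end

section
/- Let g : ℝ → ℝ satisfy (g1) and (g2) with constant m > 0, define, for t ≥ 0, g₁(t) = max(g(t)+mt, 0) and g₂(t) = g₁(t) − g(t), extended oddly to t < 0. Let {u_j}_{j∈ℕ} ⊂ L²(ℝ^N) and u ∈ L²(ℝ^N) be such that u_j(x) → u(x) for a.e. x ∈ ℝ^N, g₂(u_j)u_j is integrable for every j, g₂(u)u is integrable, and ∫_{ℝ^N} g₂(u_j(x))u_j(x) dx → ∫_{ℝ^N} g₂(u(x))u(x) dx. Then u_j → u strongly in L²(ℝ^N). -/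
/-!
Since `g₂(t)t ≥ m t²`, the functions `(2/m)(g₂(u_j)u_j + g₂(u)u) - (u_j - u)²` are nonnegative
and converge a.e. to `(4/m) g₂(u)u`. By Fatou's lemma, `(4/m) ∫ g₂(u)u` is at most the liminf of
their integrals, which is `(4/m) ∫ g₂(u)u - limsup ‖u_j - u‖₂²` because `∫ g₂(u_j)u_j → ∫ g₂(u)u`.
-/

open MeasureTheory Filter Topology ENNReal

open scoped NNReal

theorem continuous_gOne {g : ℝ → ℝ} (m : ℝ) (hg : Continuous g) (hg0 : g 0 = 0) :
    Continuous (gOne g m) := by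
  refine Continuous.if_le (by fun_prop) (by fun_prop) continuous_const continuous_id ?_
  intro t ht
  simp [← ht, hg0]

theorem continuous_gTwo {g : ℝ → ℝ} (m : ℝ) (hg : Continuous g) (hg0 : g 0 = 0) :
    Continuous (gTwo g m) :=
  (continuous_gOne m hg hg0).sub hg

theorem mul_sq_le_gTwo_mul_self {g : ℝ → ℝ} {m : ℝ} (hodd : ∀ t, g (-t) = -g t) (t : ℝ) :
    m * t ^ 2 ≤ gTwo g m t * t := by
  rcases le_or_gt 0 t with ht | ht
  · have : m * t ≤ gTwo g m t := by
      rw [gTwo, gOne, if_pos ht]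
      linarith [le_max_left (g t + m * t) 0]
    nlinarith [mul_le_mul_of_nonneg_right this ht]
  · have : gTwo g m t ≤ m * t := by
      rw [gTwo, gOne, if_neg (not_le.2 ht), hodd]
      linarith [le_max_left (-g t + m * -t) 0]
    nlinarith [mul_le_mul_of_nonpos_right this ht.le]

section

variable {ι α : Type*} {l : Filter ι}

theorem ENNReal.tendsto_nhds_zero_of_add_eq_of_le_liminf {a b c : ι → ℝ≥0∞} {L : ℝ≥0∞}
    (habc : ∀ i, a i + b i = c i) (hc : Tendsto c l (𝓝 L)) (hL : L ≠ ∞)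
    (ha : L ≤ liminf a l) : Tendsto b l (𝓝 0) := by
  have ha' : Tendsto (fun i => min (a i) L) l (𝓝 L) := by
    refine tendsto_order.2 ⟨fun y hy => ?_, fun y hy => .of_forall fun i => ?_⟩
    · exact (eventually_lt_of_lt_liminf (hy.trans_le ha)).mono fun i hi => lt_min hi hy
    · exact (min_le_right _ _).trans_lt hy
  have hb : ∀ i, b i ≤ c i - min (a i) L := fun i =>
    ENNReal.le_sub_of_add_le_left (ne_top_of_le_ne_top hL (min_le_right _ _))
      ((add_le_add_left (min_le_left _ _) _).trans (habc i).le)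
  have hcL : Tendsto (fun i => c i - min (a i) L) l (𝓝 (L - L)) :=
    ENNReal.Tendsto.sub hc ha' (Or.inl hL)
  rw [tsub_self] at hcL
  exact tendsto_of_tendsto_of_tendsto_of_le_of_le tendsto_const_nhds hcL (fun _ => zero_le) hb

variable [MeasurableSpace α] {μ : Measure α}

theorem tendsto_lintegral_nhds_zero_of_add_eq [l.NeBot] [l.IsCountablyGenerated]
    {Φ q H : ι → α → ℝ≥0∞} {φ : α → ℝ≥0∞} (hΦ_meas : ∀ i, AEMeasurable (Φ i) μ)
    (hΦqH : ∀ i x, Φ i x + q i x = H i x)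
    (hΦφ : ∀ᵐ x ∂μ, Tendsto (fun i => Φ i x) l (𝓝 (φ x)))
    (hH : Tendsto (fun i => ∫⁻ x, H i x ∂μ) l (𝓝 (∫⁻ x, φ x ∂μ))) (hφ : ∫⁻ x, φ x ∂μ ≠ ∞) :
    Tendsto (fun i => ∫⁻ x, q i x ∂μ) l (𝓝 0) := by
  refine ENNReal.tendsto_nhds_zero_of_add_eq_of_le_liminf (a := fun i => ∫⁻ x, Φ i x ∂μ)
    (fun i => ?_) hH hφ ?_
  · rw [← lintegral_add_left' (hΦ_meas i)]
    exact lintegral_congr (hΦqH i)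
  · calc ∫⁻ x, φ x ∂μ = ∫⁻ x, liminf (fun i => Φ i x) l ∂μ :=
          lintegral_congr_ae (hΦφ.mono fun x hx => hx.liminf_eq.symm)
      _ ≤ liminf (fun i => ∫⁻ x, Φ i x ∂μ) l := lintegral_liminf_le' hΦ_meas

theorem tendsto_eLpNorm_nhds_zero_of_tendsto_lintegral {E : Type*} [NormedAddCommGroup E]
    {f : ι → α → E} {p : ℝ≥0} (hp : p ≠ 0)
    (hf : Tendsto (fun i => ∫⁻ x, ‖f i x‖ₑ ^ (p : ℝ) ∂μ) l (𝓝 0)) :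
    Tendsto (fun i => eLpNorm (f i) p μ) l (𝓝 0) := by
  simp_rw [← eLpNorm_nnreal_pow_eq_lintegral hp] at hf
  have := hf.ennrpow_const (p : ℝ)⁻¹
  have hp' : (p : ℝ) ≠ 0 := by exact_mod_cast hp
  simp_rw [← ENNReal.rpow_mul, mul_inv_cancel₀ hp', ENNReal.rpow_one] at this
  rwa [ENNReal.zero_rpow_of_pos (by positivity)] at this

theorem tendsto_eLpNorm_sub_of_tendsto_integral_of_mul_sq_le [l.NeBot] [l.IsCountablyGenerated]
    {G : ℝ → ℝ} {m : ℝ} (hG : Continuous G) (hm : 0 < m) (hGm : ∀ t, m * t ^ 2 ≤ G t)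
    {u : ι → α → ℝ} {v : α → ℝ} (hu : ∀ i, AEStronglyMeasurable (u i) μ)
    (hv : AEStronglyMeasurable v μ) (hae : ∀ᵐ x ∂μ, Tendsto (fun i => u i x) l (𝓝 (v x)))
    (hint : ∀ i, Integrable (fun x => G (u i x)) μ) (hintv : Integrable (fun x => G (v x)) μ)
    (hconv : Tendsto (fun i => ∫ x, G (u i x) ∂μ) l (𝓝 (∫ x, G (v x) ∂μ))) :
    Tendsto (fun i => eLpNorm (u i - v) 2 μ) l (𝓝 0) := by
  set k := 2 / m
  have hk : 0 ≤ k := by positivity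
  have hG_nonneg : ∀ t, 0 ≤ G t := fun t => (by positivity : 0 ≤ m * t ^ 2).trans (hGm t)
  have hsq_le : ∀ a b, (a - b) ^ 2 ≤ k * (G a + G b) := fun a b => by
    rw [div_mul_eq_mul_div, le_div_iff₀ hm]
    nlinarith [hGm a, hGm b, sq_nonneg (a + b)]
  have hlintegral : ∀ w : α → ℝ, Integrable (fun x => G (w x)) μ →
      ∫⁻ x, ENNReal.ofReal (k * (G (w x) + G (v x))) ∂μ
        = ENNReal.ofReal (k * (∫ x, G (w x) ∂μ + ∫ x, G (v x) ∂μ)) := fun w hw => by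
    rw [← integral_add hw hintv, ← integral_const_mul,
      ofReal_integral_eq_lintegral_ofReal (f := fun x => k * (G (w x) + G (v x)))
        ((hw.add hintv).const_mul k)
        (.of_forall fun x => mul_nonneg hk (add_nonneg (hG_nonneg _) (hG_nonneg _)))]
  refine tendsto_eLpNorm_nhds_zero_of_tendsto_lintegral (p := 2) two_ne_zero
    (tendsto_lintegral_nhds_zero_of_add_eq
      (Φ := fun i x => ENNReal.ofReal (k * (G (u i x) + G (v x)) - (u i x - v x) ^ 2))
      (H := fun i x => ENNReal.ofReal (k * (G (u i x) + G (v x))))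
      (φ := fun x => ENNReal.ofReal (k * (G (v x) + G (v x))))
      (fun i => ?_) (fun i x => ?_) ?_ ?_ ?_)
  · have : Continuous fun p : ℝ × ℝ => k * (G p.1 + G p.2) - (p.1 - p.2) ^ 2 := by fun_prop
    exact (this.measurable.comp_aemeasurable
      ((hu i).aemeasurable.prodMk hv.aemeasurable)).ennreal_ofReal
  · rw [Pi.sub_apply, Real.enorm_eq_ofReal_abs, NNReal.coe_ofNat, ENNReal.rpow_two,
      ← ENNReal.ofReal_pow (abs_nonneg _), sq_abs,
      ← ENNReal.ofReal_add (sub_nonneg.2 (hsq_le _ _)) (sq_nonneg _), sub_add_cancel]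
  · filter_upwards [hae] with x hx
    have : Continuous fun t => ENNReal.ofReal (k * (G t + G (v x)) - (t - v x) ^ 2) :=
      ENNReal.continuous_ofReal.comp (by fun_prop)
    simpa [Function.comp_def] using (this.tendsto (v x)).comp hx
  · simp_rw [hlintegral _ (hint _), hlintegral _ hintv]
    exact (ENNReal.continuous_ofReal.tendsto _).comp ((hconv.add_const _).const_mul k)
  · rw [hlintegral _ hintv]
    exact ENNReal.ofReal_ne_top

end

theorem strong_L2_convergence_general
    (N : ℕ)
    (g : ℝ → ℝ) (m : ℝ)
-- (g1)
    (hg1 : ContDiff ℝ 1 g) (hodd : ∀ t, g (-t) = -g t)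
    -- (g2)
    (hm : 0 < m)
    (u : ℕ → EuclideanSpace ℝ (Fin N) → ℝ) (v : EuclideanSpace ℝ (Fin N) → ℝ)
    (hu : ∀ j, MemLp (u j) 2 volume) (hv : MemLp v 2 volume)
    (hae : ∀ᵐ x : EuclideanSpace ℝ (Fin N), Tendsto (fun j => u j x) atTop (𝓝 (v x)))
    (hint : ∀ j, Integrable (fun x => gTwo g m (u j x) * u j x) volume)
    (hintv : Integrable (fun x => gTwo g m (v x) * v x) volume)
    (hconv : Tendsto (fun j => ∫ x : EuclideanSpace ℝ (Fin N), gTwo g m (u j x) * u j x)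
      atTop (𝓝 (∫ x : EuclideanSpace ℝ (Fin N), gTwo g m (v x) * v x))) :
    Tendsto (fun j => eLpNorm (u j - v) 2 volume) atTop (𝓝 0) := by
  have hg0 : g 0 = 0 := by linarith [show g 0 = -g 0 by simpa using hodd 0]
  exact tendsto_eLpNorm_sub_of_tendsto_integral_of_mul_sq_le
    ((continuous_gTwo m hg1.continuous hg0).mul continuous_id) hm (mul_sq_le_gTwo_mul_self hodd)
    (fun j => (hu j).aestronglyMeasurable) hv.aestronglyMeasurable hae hint hintv hconv

/-- a.e. convergence together with convergence of `∫ g₂(u_j)u_j`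
forces strong `L²` convergence. -/
theorem strong_L2_convergence
    (N : ℕ) (hN : 1 ≤ N)
    (g : ℝ → ℝ) (m : ℝ)
-- (g1)
    (hg1 : ContDiff ℝ 1 g) (hodd : ∀ t, g (-t) = -g t)
    -- (g2)
    (hm : 0 < m)
    (hg2a : ⊥ < Filter.liminf (fun t : ℝ => ((g t / t : ℝ) : EReal)) (𝓝[>] (0:ℝ)))
    (hg2b : Filter.liminf (fun t : ℝ => ((g t / t : ℝ) : EReal)) (𝓝[>] (0:ℝ)) ≤
        Filter.limsup (fun t : ℝ => ((g t / t : ℝ) : EReal)) (𝓝[>] (0:ℝ)))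
    (hg2c : Filter.limsup (fun t : ℝ => ((g t / t : ℝ) : EReal)) (𝓝[>] (0:ℝ))
        = ((-m : ℝ) : EReal))
    (u : ℕ → EuclideanSpace ℝ (Fin N) → ℝ) (v : EuclideanSpace ℝ (Fin N) → ℝ)
    (hu : ∀ j, MemLp (u j) 2 volume) (hv : MemLp v 2 volume)
    (hae : ∀ᵐ x : EuclideanSpace ℝ (Fin N), Tendsto (fun j => u j x) atTop (𝓝 (v x)))
    (hint : ∀ j, Integrable (fun x => gTwo g m (u j x) * u j x) volume)
    (hintv : Integrable (fun x => gTwo g m (v x) * v x) volume)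
    (hconv : Tendsto (fun j => ∫ x : EuclideanSpace ℝ (Fin N), gTwo g m (u j x) * u j x)
      atTop (𝓝 (∫ x : EuclideanSpace ℝ (Fin N), gTwo g m (v x) * v x))) :
    Tendsto (fun j => eLpNorm (u j - v) 2 volume) atTop (𝓝 0) :=
  strong_L2_convergence_general N g m hg1 hodd hm u v hu hv hae hint hintv hconv
end
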